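/- For every even L ≥ 2, the Q2R model satisfies 4 ≤ |P₁| and |P₁| < |P₂|, where P₁ is the set of fixed points of F and P₂ is the set of configurations of minimal period 2 under F. (In particular (𝟙,𝟙), (−𝟙,−𝟙) and the two chessboard configurations are fixed points.) -/

import Mathlib

/-- A site of the `L × L` toroidal lattice. -/
abbrev Site (L : ℕ) := ZMod L × ZMod L

/-- The set `Ω` of states: functions on the lattice with values in `{-1, 1}`. -/
def Omega (L : ℕ) := {x : Site L → ℤ // ∀ k, x k = 1 ∨ x k = -1}

namespace Q2R

variable {L : ℕ}

/-- The sum of the four von Neumann neighbors of site `k`. -/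
def nbhdSum (x : Site L → ℤ) (k : Site L) : ℤ :=
  x (k + (1, 0)) + x (k - (1, 0)) + x (k + (0, 1)) + x (k - (0, 1))

/-- The map `φ : Ω → Ω`, detecting null neighborhoods. -/
def phi (x : Omega L) : Omega L :=
  ⟨fun k => if nbhdSum x.1 k = 0 then -1 else 1, fun k => by
    by_cases h : nbhdSum x.1 k = 0 <;> simp [h]⟩

/-- Hadamard (pointwise) product `x ⊙ y`. -/
def had (x y : Omega L) : Omega L :=
  ⟨fun k => x.1 k * y.1 k, fun k => by
    rcases x.2 k with h | h <;> rcases y.2 k with h' | h' <;> simp [h, h']⟩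

/-- The constant state `𝟙`. -/
def one : Omega L := ⟨fun _ => 1, fun _ => Or.inl rfl⟩

/-- Negation: `-x = (-𝟙) ⊙ x`. -/
def neg (x : Omega L) : Omega L := had ⟨fun _ => -1, fun _ => Or.inr rfl⟩ x

/-- The Q2R map `F(x, y) = (y ⊙ φ(x), x)`. -/
def F : Omega L × Omega L → Omega L × Omega L := fun p => (had p.2 (phi p.1), p.1)

/-- The configuration `p` has minimal period `T ≥ 1` under `F`. -/
def IsMinPeriod (p : Omega L × Omega L) (T : ℕ) : Prop :=
  F^[T] p = p ∧ ∀ t, 0 < t → t < T → F^[t] p ≠ p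

/-- The orbit of a configuration under `F`. -/
def orbit (p : Omega L × Omega L) : Set (Omega L × Omega L) :=
  {q | ∃ t : ℕ, F^[t] p = q}

end Q2R

/-!
A fixed point of `F` is a pair `(x, x)`, and a point of minimal period two a pair `(x, y)` with
`x ≠ y`, where in both cases the states have no null neighbourhood, i.e. `φ = 𝟙`. Writing `A` for
the set of such states, `|P₁| = |A|` and `|P₂| = |A| (|A| - 1)`, so `|P₁| < |P₂|` once `|A| ≥ 3`.
The states `±𝟙` and the two chessboards lie in `A`, since every site sees four equal neighbours,
and their values at the sites `(0, 0)` and `(0, 1)` already tell them apart.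
-/

theorem Nat.card_subtype_fst_ne_snd (α : Type*) [Finite α] :
    Nat.card {q : α × α // q.1 ≠ q.2} = Nat.card α * (Nat.card α - 1) := by
  classical
  have := Fintype.ofFinite α
  rw [Nat.card_eq_fintype_card, Fintype.card_subtype, Nat.card_eq_fintype_card, Nat.mul_sub_one,
    ← Finset.card_univ, ← Finset.offDiag_card]
  congr 1
  ext
  simp

namespace Q2R

variable {L : ℕ}

@[ext]
lemma Omega.ext {x y : Omega L} (h : ∀ k, x.1 k = y.1 k) : x = y :=
  Subtype.ext (funext h)

instance [NeZero L] : Finite (Omega L) :=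
  have : Finite {z : ℤ // z = 1 ∨ z = -1} := Set.toFinite ({1, -1} : Set ℤ)
  Finite.of_equiv _ (Equiv.subtypePiEquivPi (p := fun _ z => z = 1 ∨ z = -1)).symm

lemma val_ne_zero (x : Omega L) (k : Site L) : x.1 k ≠ 0 := by
  rcases x.2 k with h | h <;> simp [h]

lemma had_one (x : Omega L) : had x one = x := by
  ext k
  simp [had, one]

lemma had_eq_self_iff (x u : Omega L) : had x u = x ↔ u = one := by
  refine ⟨fun h => ?_, fun h => h ▸ had_one x⟩
  ext k
  have hk : x.1 k * u.1 k = x.1 k * 1 := by simpa [had] using congrFun (congrArg Subtype.val h) k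
  exact mul_left_cancel₀ (val_ne_zero x k) hk

lemma phi_eq_one_iff (x : Omega L) : phi x = one ↔ ∀ k, nbhdSum x.1 k ≠ 0 := by
  constructor
  · intro h k hk
    simpa [phi, one, hk] using congrFun (congrArg Subtype.val h) k
  · intro h
    ext k
    simp [phi, one, h k]

lemma one_val (k : Site L) : (one : Omega L).1 k = 1 :=
  rfl

lemma neg_val (x : Omega L) (k : Site L) : (neg x).1 k = -x.1 k := by
  simp [neg, had]

lemma phi_neg (x : Omega L) : phi (neg x) = phi x := by
  have hsum (k : Site L) : nbhdSum (neg x).1 k = -nbhdSum x.1 k := by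
    simp only [nbhdSum, neg_val]
    ring
  ext k
  simp [phi, hsum]

lemma phi_one : phi (one : Omega L) = one :=
  (phi_eq_one_iff _).2 fun k => by simp [nbhdSum, one]

lemma F_eq_self_iff (p : Omega L × Omega L) : F p = p ↔ p.2 = p.1 ∧ phi p.1 = one := by
  obtain ⟨x, y⟩ := p
  simp only [F, Prod.ext_iff]
  constructor
  · rintro ⟨hx, rfl⟩
    exact ⟨rfl, (had_eq_self_iff _ _).1 hx⟩
  · rintro ⟨rfl, hφ⟩
    exact ⟨by rw [hφ, had_one], rfl⟩

lemma F_iterate_two_eq_self_iff (p : Omega L × Omega L) :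
    F^[2] p = p ↔ phi p.1 = one ∧ phi p.2 = one := by
  obtain ⟨x, y⟩ := p
  simp only [Function.iterate_succ, Function.iterate_zero, Function.comp_apply, id, F,
    Prod.ext_iff]
  constructor
  · rintro ⟨hx, hy⟩
    rw [hy] at hx
    exact ⟨(had_eq_self_iff _ _).1 hy, (had_eq_self_iff _ _).1 hx⟩
  · rintro ⟨hx, hy⟩
    rw [hx, had_one, hy, had_one]
    exact ⟨rfl, rfl⟩

lemma isMinPeriod_two_iff (p : Omega L × Omega L) :
    IsMinPeriod p 2 ↔ phi p.1 = one ∧ phi p.2 = one ∧ p.1 ≠ p.2 := by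
  have hF_ne_self : F p ≠ p ↔ p.1 ≠ p.2 ∨ phi p.1 ≠ one := by
    rw [Ne, F_eq_self_iff, eq_comm, not_and_or]
  rw [IsMinPeriod, F_iterate_two_eq_self_iff]
  constructor
  · rintro ⟨⟨hx, hy⟩, hmin⟩
    exact ⟨hx, hy, ((hF_ne_self.1 (hmin 1 one_pos one_lt_two)).resolve_right (not_not.2 hx))⟩
  · rintro ⟨hx, hy, hne⟩
    refine ⟨⟨hx, hy⟩, fun t ht ht2 => ?_⟩
    obtain rfl : t = 1 := by omega
    exact hF_ne_self.2 (Or.inl hne)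

def fixedPointsEquiv : {p : Omega L × Omega L | F p = p} ≃ {x : Omega L | phi x = one} where
  toFun p := ⟨p.1.1, ((F_eq_self_iff _).1 p.2).2⟩
  invFun x := ⟨(x.1, x.1), (F_eq_self_iff _).2 ⟨rfl, x.2⟩⟩
  left_inv p := Subtype.ext (Prod.ext rfl ((F_eq_self_iff _).1 p.2).1.symm)
  right_inv _ := rfl

def minPeriodTwoEquiv :
    {p : Omega L × Omega L | IsMinPeriod p 2} ≃
      {q : {x : Omega L | phi x = one} × {x : Omega L | phi x = one} // q.1 ≠ q.2} where
  toFun p :=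
    have hp := (isMinPeriod_two_iff _).1 p.2
    ⟨(⟨p.1.1, hp.1⟩, ⟨p.1.2, hp.2.1⟩), fun h => hp.2.2 (congrArg Subtype.val h)⟩
  invFun q :=
    ⟨(q.1.1.1, q.1.2.1), (isMinPeriod_two_iff _).2 ⟨q.1.1.2, q.1.2.2, fun h => q.2 (Subtype.ext h)⟩⟩
  left_inv _ := rfl
  right_inv _ := rfl

def chessboard (h2 : 2 ∣ L) : Omega L :=
  ⟨fun k => if ZMod.castHom h2 (ZMod 2) (k.1 + k.2) = 0 then 1 else -1, fun k => by
    dsimp only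
    split_ifs <;> simp⟩

lemma chessboard_add (h2 : 2 ∣ L) (k a : Site L) (ha : a.1 + a.2 = 1) :
    (chessboard h2).1 (k + a) = -(chessboard h2).1 k := by
  have hparity : ZMod.castHom h2 (ZMod 2) ((k + a).1 + (k + a).2) =
      ZMod.castHom h2 (ZMod 2) (k.1 + k.2) + 1 := by
    rw [Prod.fst_add, Prod.snd_add, add_add_add_comm, ha, map_add, map_one]
  simp only [chessboard, hparity]
  generalize ZMod.castHom h2 (ZMod 2) (k.1 + k.2) = z
  revert z
  decide

lemma chessboard_sub (h2 : 2 ∣ L) (k a : Site L) (ha : a.1 + a.2 = 1) :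
    (chessboard h2).1 (k - a) = -(chessboard h2).1 k := by
  have h := chessboard_add h2 (k - a) a ha
  rw [sub_add_cancel] at h
  linarith

lemma chessboard_zero (h2 : 2 ∣ L) : (chessboard h2).1 0 = 1 := by
  simp [chessboard]

lemma chessboard_zero_one (h2 : 2 ∣ L) : (chessboard h2).1 (0, 1) = -1 := by
  simpa [chessboard_zero] using chessboard_add h2 0 (0, 1) (zero_add 1)

lemma nbhdSum_chessboard (h2 : 2 ∣ L) (k : Site L) :
    nbhdSum (chessboard h2).1 k = -4 * (chessboard h2).1 k := by
  rw [nbhdSum, chessboard_add h2 k (1, 0) (add_zero 1), chessboard_sub h2 k (1, 0) (add_zero 1),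
    chessboard_add h2 k (0, 1) (zero_add 1), chessboard_sub h2 k (0, 1) (zero_add 1)]
  ring

lemma phi_chessboard (h2 : 2 ∣ L) : phi (chessboard h2) = one :=
  (phi_eq_one_iff _).2 fun k => by
    rw [nbhdSum_chessboard]
    exact mul_ne_zero (by norm_num) (val_ne_zero _ k)

lemma four_le_card_phi_eq_one [NeZero L] (h2 : 2 ∣ L) :
    4 ≤ Nat.card {x : Omega L | phi x = one} := by
  let signs (x : {x : Omega L | phi x = one}) : Bool × Bool :=
    (decide (x.1.1 0 = 1), decide (x.1.1 (0, 1) = 1))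
  have hsigns : Function.Surjective signs := by
    have hneg {x : Omega L} (hx : phi x = one) : phi (neg x) = one := (phi_neg x).trans hx
    rintro ⟨_ | _, _ | _⟩
    · exact ⟨⟨neg one, hneg phi_one⟩, by simp [signs, neg_val, one_val]⟩
    · exact ⟨⟨neg (chessboard h2), hneg (phi_chessboard h2)⟩,
        by simp [signs, neg_val, chessboard_zero, chessboard_zero_one]⟩
    · exact ⟨⟨chessboard h2, phi_chessboard h2⟩,
        by simp [signs, chessboard_zero, chessboard_zero_one]⟩
    · exact ⟨⟨one, phi_one⟩, by simp [signs, one_val]⟩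
  simpa using Nat.card_le_card_of_surjective signs hsigns

end Q2R

open Q2R

/-- For every even `L ≥ 2`, `4 ≤ |P₁|` and `|P₁| < |P₂|`. -/
theorem q2r_card_P1_bounds (L : ℕ) (hL : 2 ≤ L) (hE : Even L) :
    4 ≤ Nat.card {p : Omega L × Omega L | F p = p} ∧
      Nat.card {p : Omega L × Omega L | F p = p} <
        Nat.card {p : Omega L × Omega L | IsMinPeriod p 2} := by
  have : NeZero L := ⟨by omega⟩
  have hA := four_le_card_phi_eq_one hE.two_dvd
  rw [Nat.card_congr fixedPointsEquiv, Nat.card_congr minPeriodTwoEquiv,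
    Nat.card_subtype_fst_ne_snd]
  exact ⟨hA, lt_mul_of_one_lt_right (by omega) (by omega)⟩
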